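/- Let H = A #_ψ^φ B be a cross product bialgebra over a commutative ring k. The map ψ is left and right conormal (i.e. (ε_A⊗id_B)ψ(b⊗a) = ε_A(a) b and (id_A⊗ε_B)ψ(b⊗a) = ε_B(b) a for all a,b) if and only if ψ is the flip map, ψ(b⊗a) = a⊗b. -/

import Mathlib

/-!
Let `P = id_A ⊗ χ_B : H → A` and `Q = χ_A ⊗ id_B : H → B`, where `χ_B = ε_A(1) ε_B` and
`χ_A = ε_B(1) ε_A`. The units `ε_A(1)`, `ε_B(1)` are inverse to each other but need not be `1`
(rescaling `Δ_A` by `c` and `Δ_B` by `c⁻¹` does not change `Δ_H`); with this normalisation the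
multiplicativity of `ε_H` makes `χ_A`, `χ_B` characters. Conormality then makes `P` and `Q`
multiplicative, so `F = P ⊗ Q` is multiplicative from `H ⊗ H` to the ordinary tensor product
algebra `A ⊗ B`, and the counit axiom of `H` makes `F` a retraction of `Δ_H`. As `Δ_H` is
multiplicative,
`ψ(b ⊗ a) = F(Δ_H((1 ⊗ b)(a ⊗ 1))) = F(Δ_H(1 ⊗ b)) F(Δ_H(a ⊗ 1)) = (1 ⊗ b)(a ⊗ 1) = a ⊗ b`.
-/

open TensorProduct

variable {k A B : Type*} [CommRing k] [Ring A] [Ring B] [Algebra k A] [Algebra k B]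
  [Coalgebra k A] [Coalgebra k B]

/-- The cross product multiplication on `A ⊗ B` induced by `ψ : B ⊗ A → A ⊗ B`. -/
noncomputable def crossMul (ψ : B ⊗[k] A →ₗ[k] A ⊗[k] B) :
    (A ⊗[k] B) ⊗[k] (A ⊗[k] B) →ₗ[k] A ⊗[k] B :=
  TensorProduct.map (LinearMap.mul' k A) (LinearMap.mul' k B) ∘ₗ
    (TensorProduct.assoc k (A ⊗[k] A) B B).toLinearMap ∘ₗ
    TensorProduct.map
      ((TensorProduct.assoc k A A B).symm.toLinearMap ∘ₗ
        TensorProduct.map (LinearMap.id : A →ₗ[k] A) ψ ∘ₗ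
        (TensorProduct.assoc k A B A).toLinearMap)
      (LinearMap.id : B →ₗ[k] B) ∘ₗ
    (TensorProduct.assoc k (A ⊗[k] B) A B).symm.toLinearMap

/-- (a): `ψ ∘ (m_B ⊗ id_A) = (id_A ⊗ m_B) ∘ (ψ ⊗ id_B) ∘ (id_B ⊗ ψ)`. -/
def psiCondA (ψ : B ⊗[k] A →ₗ[k] A ⊗[k] B) : Prop :=
  ψ ∘ₗ TensorProduct.map (LinearMap.mul' k B) (LinearMap.id : A →ₗ[k] A) =
    TensorProduct.map (LinearMap.id : A →ₗ[k] A) (LinearMap.mul' k B) ∘ₗ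
      (TensorProduct.assoc k A B B).toLinearMap ∘ₗ
      TensorProduct.map ψ (LinearMap.id : B →ₗ[k] B) ∘ₗ
      (TensorProduct.assoc k B A B).symm.toLinearMap ∘ₗ
      TensorProduct.map (LinearMap.id : B →ₗ[k] B) ψ ∘ₗ
      (TensorProduct.assoc k B B A).toLinearMap

/-- (b): `ψ ∘ (id_B ⊗ m_A) = (m_A ⊗ id_B) ∘ (id_A ⊗ ψ) ∘ (ψ ⊗ id_A)`. -/
def psiCondB (ψ : B ⊗[k] A →ₗ[k] A ⊗[k] B) : Prop :=
  ψ ∘ₗ TensorProduct.map (LinearMap.id : B →ₗ[k] B) (LinearMap.mul' k A) =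
    TensorProduct.map (LinearMap.mul' k A) (LinearMap.id : B →ₗ[k] B) ∘ₗ
      (TensorProduct.assoc k A A B).symm.toLinearMap ∘ₗ
      TensorProduct.map (LinearMap.id : A →ₗ[k] A) ψ ∘ₗ
      (TensorProduct.assoc k A B A).toLinearMap ∘ₗ
      TensorProduct.map ψ (LinearMap.id : A →ₗ[k] A) ∘ₗ
      (TensorProduct.assoc k B A A).symm.toLinearMap

/-- (c): `ψ(b ⊗ 1_A) = 1_A ⊗ b`. -/
def psiCondC (ψ : B ⊗[k] A →ₗ[k] A ⊗[k] B) : Prop :=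
  ∀ b : B, ψ (b ⊗ₜ[k] (1 : A)) = (1 : A) ⊗ₜ[k] b

/-- (d): `ψ(1_B ⊗ a) = a ⊗ 1_B`. -/
def psiCondD (ψ : B ⊗[k] A →ₗ[k] A ⊗[k] B) : Prop :=
  ∀ a : A, ψ ((1 : B) ⊗ₜ[k] a) = a ⊗ₜ[k] (1 : B)

/-- The cross coproduct comultiplication on `A ⊗ B` induced by `φ : A ⊗ B → B ⊗ A`. -/
noncomputable def crossComul (φ : A ⊗[k] B →ₗ[k] B ⊗[k] A) :
    A ⊗[k] B →ₗ[k] (A ⊗[k] B) ⊗[k] (A ⊗[k] B) :=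
  (TensorProduct.assoc k (A ⊗[k] B) A B).toLinearMap ∘ₗ
    TensorProduct.map
      ((TensorProduct.assoc k A B A).symm.toLinearMap ∘ₗ
        TensorProduct.map (LinearMap.id : A →ₗ[k] A) φ ∘ₗ
        (TensorProduct.assoc k A A B).toLinearMap)
      (LinearMap.id : B →ₗ[k] B) ∘ₗ
    (TensorProduct.assoc k (A ⊗[k] A) B B).symm.toLinearMap ∘ₗ
    TensorProduct.map (Coalgebra.comul (R := k) (A := A)) (Coalgebra.comul (R := k) (A := B))

/-- The counit `ε_A ⊗ ε_B` on `A ⊗ B`. -/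
noncomputable def crossCounit : A ⊗[k] B →ₗ[k] k :=
  (TensorProduct.lid k k).toLinearMap ∘ₗ
    TensorProduct.map (Coalgebra.counit (R := k) (A := A)) (Coalgebra.counit (R := k) (A := B))

/-- (a): `(Δ_B ⊗ id_A) ∘ φ = (id_B ⊗ φ) ∘ (φ ⊗ id_B) ∘ (id_A ⊗ Δ_B)`. -/
def phiCondA (φ : A ⊗[k] B →ₗ[k] B ⊗[k] A) : Prop :=
  TensorProduct.map (Coalgebra.comul (R := k) (A := B)) (LinearMap.id : A →ₗ[k] A) ∘ₗ φ =
    (TensorProduct.assoc k B B A).symm.toLinearMap ∘ₗ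
      TensorProduct.map (LinearMap.id : B →ₗ[k] B) φ ∘ₗ
      (TensorProduct.assoc k B A B).toLinearMap ∘ₗ
      TensorProduct.map φ (LinearMap.id : B →ₗ[k] B) ∘ₗ
      (TensorProduct.assoc k A B B).symm.toLinearMap ∘ₗ
      TensorProduct.map (LinearMap.id : A →ₗ[k] A) (Coalgebra.comul (R := k) (A := B))

/-- (b): `(id_B ⊗ Δ_A) ∘ φ = (φ ⊗ id_A) ∘ (id_A ⊗ φ) ∘ (Δ_A ⊗ id_B)`. -/
def phiCondB (φ : A ⊗[k] B →ₗ[k] B ⊗[k] A) : Prop :=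
  TensorProduct.map (LinearMap.id : B →ₗ[k] B) (Coalgebra.comul (R := k) (A := A)) ∘ₗ φ =
    (TensorProduct.assoc k B A A).toLinearMap ∘ₗ
      TensorProduct.map φ (LinearMap.id : A →ₗ[k] A) ∘ₗ
      (TensorProduct.assoc k A B A).symm.toLinearMap ∘ₗ
      TensorProduct.map (LinearMap.id : A →ₗ[k] A) φ ∘ₗ
      (TensorProduct.assoc k A A B).toLinearMap ∘ₗ
      TensorProduct.map (Coalgebra.comul (R := k) (A := A)) (LinearMap.id : B →ₗ[k] B)

/-- (c): `(id_B ⊗ ε_A) ∘ φ = ε_A ⊗ id_B`. -/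
def phiCondC (φ : A ⊗[k] B →ₗ[k] B ⊗[k] A) : Prop :=
  (TensorProduct.rid k B).toLinearMap ∘ₗ
      TensorProduct.map (LinearMap.id : B →ₗ[k] B) (Coalgebra.counit (R := k) (A := A)) ∘ₗ φ =
    (TensorProduct.lid k B).toLinearMap ∘ₗ
      TensorProduct.map (Coalgebra.counit (R := k) (A := A)) (LinearMap.id : B →ₗ[k] B)

/-- (d): `(ε_B ⊗ id_A) ∘ φ = id_A ⊗ ε_B`. -/
def phiCondD (φ : A ⊗[k] B →ₗ[k] B ⊗[k] A) : Prop :=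
  (TensorProduct.lid k A).toLinearMap ∘ₗ
      TensorProduct.map (Coalgebra.counit (R := k) (A := B)) (LinearMap.id : A →ₗ[k] A) ∘ₗ φ =
    (TensorProduct.rid k A).toLinearMap ∘ₗ
      TensorProduct.map (LinearMap.id : A →ₗ[k] A) (Coalgebra.counit (R := k) (A := B))

/-- `A ⊗ B` with the cross product multiplication induced by `ψ`, unit `1 ⊗ 1`, the cross
coproduct comultiplication induced by `φ` and counit `ε_A ⊗ ε_B` is a bialgebra. -/
def IsCrossBialgebra (ψ : B ⊗[k] A →ₗ[k] A ⊗[k] B) (φ : A ⊗[k] B →ₗ[k] B ⊗[k] A) : Prop :=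
  (∀ x y z : A ⊗[k] B,
      crossMul ψ (crossMul ψ (x ⊗ₜ[k] y) ⊗ₜ[k] z) =
        crossMul ψ (x ⊗ₜ[k] crossMul ψ (y ⊗ₜ[k] z))) ∧
  (∀ x : A ⊗[k] B, crossMul ψ (((1 : A) ⊗ₜ[k] (1 : B)) ⊗ₜ[k] x) = x) ∧
  (∀ x : A ⊗[k] B, crossMul ψ (x ⊗ₜ[k] ((1 : A) ⊗ₜ[k] (1 : B))) = x) ∧
  ((TensorProduct.assoc k (A ⊗[k] B) (A ⊗[k] B) (A ⊗[k] B)).toLinearMap ∘ₗ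
      TensorProduct.map (crossComul φ) (LinearMap.id : A ⊗[k] B →ₗ[k] A ⊗[k] B) ∘ₗ
        crossComul φ =
      TensorProduct.map (LinearMap.id : A ⊗[k] B →ₗ[k] A ⊗[k] B) (crossComul φ) ∘ₗ
        crossComul φ) ∧
  ((TensorProduct.lid k (A ⊗[k] B)).toLinearMap ∘ₗ
      TensorProduct.map (crossCounit (k := k) (A := A) (B := B))
        (LinearMap.id : A ⊗[k] B →ₗ[k] A ⊗[k] B) ∘ₗ crossComul φ = LinearMap.id) ∧
  ((TensorProduct.rid k (A ⊗[k] B)).toLinearMap ∘ₗ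
      TensorProduct.map (LinearMap.id : A ⊗[k] B →ₗ[k] A ⊗[k] B)
        (crossCounit (k := k) (A := A) (B := B)) ∘ₗ crossComul φ = LinearMap.id) ∧
  (crossComul φ ((1 : A) ⊗ₜ[k] (1 : B)) =
      ((1 : A) ⊗ₜ[k] (1 : B)) ⊗ₜ[k] ((1 : A) ⊗ₜ[k] (1 : B))) ∧
  (crossCounit (k := k) (A := A) (B := B) ((1 : A) ⊗ₜ[k] (1 : B)) = 1) ∧
  (crossComul φ ∘ₗ crossMul ψ =
      TensorProduct.map (crossMul ψ) (crossMul ψ) ∘ₗ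
        (TensorProduct.tensorTensorTensorComm k (A ⊗[k] B) (A ⊗[k] B) (A ⊗[k] B)
          (A ⊗[k] B)).toLinearMap ∘ₗ
        TensorProduct.map (crossComul φ) (crossComul φ)) ∧
  (crossCounit (k := k) (A := A) (B := B) ∘ₗ crossMul ψ =
      LinearMap.mul' k k ∘ₗ
        TensorProduct.map (crossCounit (k := k) (A := A) (B := B))
          (crossCounit (k := k) (A := A) (B := B)))

section Slant

variable {R M N : Type*} [CommSemiring R] [AddCommMonoid M] [AddCommMonoid N]
  [Module R M] [Module R N]

noncomputable def slantRight (χ : N →ₗ[R] R) : M ⊗[R] N →ₗ[R] M :=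
  (TensorProduct.rid R M).toLinearMap ∘ₗ χ.lTensor M

noncomputable def slantLeft (χ : M →ₗ[R] R) : M ⊗[R] N →ₗ[R] N :=
  (TensorProduct.lid R N).toLinearMap ∘ₗ χ.rTensor N

@[simp]
theorem slantRight_tmul (χ : N →ₗ[R] R) (m : M) (n : N) :
    slantRight χ (m ⊗ₜ[R] n) = χ n • m := by
  simp [slantRight]

@[simp]
theorem slantLeft_tmul (χ : M →ₗ[R] R) (m : M) (n : N) :
    slantLeft χ (m ⊗ₜ[R] n) = χ m • n := by
  simp [slantLeft]

theorem slantRight_smul (c : R) (χ : N →ₗ[R] R) :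
    slantRight (M := M) (c • χ) = c • slantRight χ := by
  ext; simp [smul_smul]

theorem slantLeft_smul (c : R) (χ : M →ₗ[R] R) :
    slantLeft (N := N) (c • χ) = c • slantLeft χ := by
  ext; simp [smul_smul]

end Slant

section Coalgebra

variable {R C : Type*} [CommSemiring R] [AddCommMonoid C] [Module R C] [Coalgebra R C]

theorem slantRight_counit_comp_comul :
    slantRight (Coalgebra.counit (R := R) (A := C)) ∘ₗ Coalgebra.comul = LinearMap.id := by
  ext c
  simp [slantRight, Coalgebra.lTensor_counit_comul]

theorem slantLeft_counit_comp_comul :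
    slantLeft (Coalgebra.counit (R := R) (A := C)) ∘ₗ Coalgebra.comul = LinearMap.id := by
  ext c
  simp [slantLeft, Coalgebra.rTensor_counit_comul]

end Coalgebra

omit [Coalgebra k A] [Coalgebra k B] in
theorem crossMul_tmul (ψ : B ⊗[k] A →ₗ[k] A ⊗[k] B) (a a' : A) (b b' : B) :
    crossMul ψ ((a ⊗ₜ[k] b) ⊗ₜ[k] (a' ⊗ₜ[k] b')) =
      TensorProduct.map (LinearMap.mulLeft k a) (LinearMap.mulRight k b') (ψ (b ⊗ₜ[k] a')) := by
  simp only [crossMul, LinearMap.comp_apply, LinearEquiv.coe_coe, TensorProduct.assoc_symm_tmul,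
    TensorProduct.map_tmul, TensorProduct.assoc_tmul, LinearMap.id_apply]
  induction ψ (b ⊗ₜ[k] a') using TensorProduct.induction_on with
  | zero => simp
  | tmul => simp
  | add _ _ hx hy => simp [tmul_add, add_tmul, hx, hy]

omit [Coalgebra k A] [Coalgebra k B] in
theorem crossMul_one_tmul_tmul_one (ψ : B ⊗[k] A →ₗ[k] A ⊗[k] B) (a : A) (b : B) :
    crossMul ψ (((1 : A) ⊗ₜ[k] b) ⊗ₜ[k] (a ⊗ₜ[k] (1 : B))) = ψ (b ⊗ₜ[k] a) := by
  simp [crossMul_tmul]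

omit [Coalgebra k A] [Coalgebra k B] in
theorem psi_one_tmul {ψ : B ⊗[k] A →ₗ[k] A ⊗[k] B}
    (h : ∀ x : A ⊗[k] B, crossMul ψ (((1 : A) ⊗ₜ[k] (1 : B)) ⊗ₜ[k] x) = x) (a : A) :
    ψ ((1 : B) ⊗ₜ[k] a) = a ⊗ₜ[k] (1 : B) := by
  simpa [crossMul_tmul] using h (a ⊗ₜ[k] 1)

omit [Coalgebra k A] [Coalgebra k B] in
theorem psi_tmul_one {ψ : B ⊗[k] A →ₗ[k] A ⊗[k] B}
    (h : ∀ x : A ⊗[k] B, crossMul ψ (x ⊗ₜ[k] ((1 : A) ⊗ₜ[k] (1 : B))) = x) (b : B) :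
    ψ (b ⊗ₜ[k] (1 : A)) = (1 : A) ⊗ₜ[k] b := by
  simpa [crossMul_tmul] using h (1 ⊗ₜ[k] b)

omit [Coalgebra k A] [Coalgebra k B] in
theorem slantRight_crossMul {ψ : B ⊗[k] A →ₗ[k] A ⊗[k] B} {χ : B →ₗ[k] k}
    (hχ : ∀ b b' : B, χ (b * b') = χ b * χ b')
    (hψ : ∀ (b : B) (a : A), slantRight χ (ψ (b ⊗ₜ[k] a)) = χ b • a) (x y : A ⊗[k] B) :
    slantRight χ (crossMul ψ (x ⊗ₜ[k] y)) = slantRight χ x * slantRight χ y := by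
  induction x using TensorProduct.induction_on with
  | zero => simp
  | add _ _ hx hx' => simp [add_tmul, hx, hx', add_mul]
  | tmul a b =>
    induction y using TensorProduct.induction_on with
    | zero => simp
    | add _ _ hy hy' => simp [tmul_add, hy, hy', mul_add]
    | tmul a' b' =>
      have hmul : slantRight χ ∘ₗ
          TensorProduct.map (LinearMap.mulLeft k a) (LinearMap.mulRight k b') =
            χ b' • (LinearMap.mulLeft k a ∘ₗ slantRight χ) := by
        ext; simp [hχ, mul_comm, smul_smul]
      rw [crossMul_tmul, ← LinearMap.comp_apply, hmul]
      simp [hψ, smul_smul, mul_comm]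

omit [Coalgebra k A] [Coalgebra k B] in
theorem slantLeft_crossMul {ψ : B ⊗[k] A →ₗ[k] A ⊗[k] B} {χ : A →ₗ[k] k}
    (hχ : ∀ a a' : A, χ (a * a') = χ a * χ a')
    (hψ : ∀ (b : B) (a : A), slantLeft χ (ψ (b ⊗ₜ[k] a)) = χ a • b) (x y : A ⊗[k] B) :
    slantLeft χ (crossMul ψ (x ⊗ₜ[k] y)) = slantLeft χ x * slantLeft χ y := by
  induction x using TensorProduct.induction_on with
  | zero => simp
  | add _ _ hx hx' => simp [add_tmul, hx, hx', add_mul]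
  | tmul a b =>
    induction y using TensorProduct.induction_on with
    | zero => simp
    | add _ _ hy hy' => simp [tmul_add, hy, hy', mul_add]
    | tmul a' b' =>
      have hmul : slantLeft χ ∘ₗ
          TensorProduct.map (LinearMap.mulLeft k a) (LinearMap.mulRight k b') =
            χ a • (LinearMap.mulRight k b' ∘ₗ slantLeft χ) := by
        ext; simp [hχ, smul_smul]
      rw [crossMul_tmul, ← LinearMap.comp_apply, hmul]
      simp [hψ, smul_smul, mul_comm]

@[simp]
theorem crossCounit_tmul (a : A) (b : B) :
    crossCounit (k := k) (a ⊗ₜ[k] b) =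
      Coalgebra.counit (R := k) a * Coalgebra.counit (R := k) b := by
  simp [crossCounit]

noncomputable def crossMiddle (φ : A ⊗[k] B →ₗ[k] B ⊗[k] A) :
    (A ⊗[k] A) ⊗[k] (B ⊗[k] B) →ₗ[k] (A ⊗[k] B) ⊗[k] (A ⊗[k] B) :=
  (TensorProduct.assoc k (A ⊗[k] B) A B).toLinearMap ∘ₗ
    TensorProduct.map
      ((TensorProduct.assoc k A B A).symm.toLinearMap ∘ₗ
        TensorProduct.map (LinearMap.id : A →ₗ[k] A) φ ∘ₗ
        (TensorProduct.assoc k A A B).toLinearMap)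
      (LinearMap.id : B →ₗ[k] B) ∘ₗ
    (TensorProduct.assoc k (A ⊗[k] A) B B).symm.toLinearMap

theorem crossComul_eq (φ : A ⊗[k] B →ₗ[k] B ⊗[k] A) :
    crossComul φ = crossMiddle φ ∘ₗ TensorProduct.map Coalgebra.comul Coalgebra.comul := by
  simp only [crossComul, crossMiddle, LinearMap.comp_assoc]

omit [Coalgebra k A] [Coalgebra k B] in
theorem crossMiddle_tmul (φ : A ⊗[k] B →ₗ[k] B ⊗[k] A) (a₁ a₂ : A) (b₁ b₂ : B) :
    crossMiddle φ ((a₁ ⊗ₜ[k] a₂) ⊗ₜ[k] (b₁ ⊗ₜ[k] b₂)) =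
      TensorProduct.map (TensorProduct.mk k A B a₁) ((TensorProduct.mk k A B).flip b₂)
        (φ (a₂ ⊗ₜ[k] b₁)) := by
  simp only [crossMiddle, LinearMap.comp_apply, LinearEquiv.coe_coe,
    TensorProduct.assoc_symm_tmul, TensorProduct.map_tmul, TensorProduct.assoc_tmul,
    LinearMap.id_apply]
  induction φ (a₂ ⊗ₜ[k] b₁) using TensorProduct.induction_on with
  | zero => simp
  | tmul => simp
  | add _ _ hx hy => simp [tmul_add, add_tmul, hx, hy]

omit [Coalgebra k A] [Coalgebra k B] in
theorem map_slant_crossMiddle_tmul (φ : A ⊗[k] B →ₗ[k] B ⊗[k] A) (χB : B →ₗ[k] k)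
    (χA : A →ₗ[k] k) (a₁ a₂ : A) (b₁ b₂ : B) :
    TensorProduct.map (slantRight χB) (slantLeft χA)
        (crossMiddle φ ((a₁ ⊗ₜ[k] a₂) ⊗ₜ[k] (b₁ ⊗ₜ[k] b₂))) =
      LinearMap.mul' k k (TensorProduct.map χB χA (φ (a₂ ⊗ₜ[k] b₁))) • (a₁ ⊗ₜ[k] b₂) := by
  rw [crossMiddle_tmul]
  induction φ (a₂ ⊗ₜ[k] b₁) using TensorProduct.induction_on with
  | zero => simp
  | tmul => simp [smul_tmul', smul_smul, mul_comm]
  | add _ _ hx hy => simp [hx, hy, add_smul]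

theorem mul'_comp_map_counit_comp_phi {φ : A ⊗[k] B →ₗ[k] B ⊗[k] A}
    (h : (TensorProduct.lid k (A ⊗[k] B)).toLinearMap ∘ₗ
      TensorProduct.map (crossCounit (k := k) (A := A) (B := B))
        (LinearMap.id : A ⊗[k] B →ₗ[k] A ⊗[k] B) ∘ₗ crossComul φ = LinearMap.id) :
    LinearMap.mul' k k ∘ₗ TensorProduct.map Coalgebra.counit Coalgebra.counit ∘ₗ φ =
      crossCounit := by
  have hmiddle : crossCounit (k := k) ∘ₗ (TensorProduct.lid k (A ⊗[k] B)).toLinearMap ∘ₗ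
      TensorProduct.map crossCounit LinearMap.id ∘ₗ crossMiddle φ =
      LinearMap.mul' k k ∘ₗ TensorProduct.map Coalgebra.counit Coalgebra.counit ∘ₗ φ ∘ₗ
        TensorProduct.map (slantLeft Coalgebra.counit) (slantRight Coalgebra.counit) := by
    apply TensorProduct.ext_fourfold'
    intro a₁ a₂ b₁ b₂
    simp only [LinearMap.comp_apply, crossMiddle_tmul, TensorProduct.map_tmul, slantLeft_tmul,
      slantRight_tmul, TensorProduct.smul_tmul_smul, map_smul]
    induction φ (a₂ ⊗ₜ[k] b₁) using TensorProduct.induction_on with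
    | zero => simp
    | tmul => simp [crossCounit]; ring
    | add _ _ hx hy => simp_all [mul_add]
  calc LinearMap.mul' k k ∘ₗ TensorProduct.map Coalgebra.counit Coalgebra.counit ∘ₗ φ
      = LinearMap.mul' k k ∘ₗ TensorProduct.map Coalgebra.counit Coalgebra.counit ∘ₗ φ ∘ₗ
          TensorProduct.map (slantLeft Coalgebra.counit ∘ₗ Coalgebra.comul)
            (slantRight Coalgebra.counit ∘ₗ Coalgebra.comul) := by
        rw [slantLeft_counit_comp_comul, slantRight_counit_comp_comul, TensorProduct.map_id,
          LinearMap.comp_id]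
    _ = crossCounit ∘ₗ (TensorProduct.lid k (A ⊗[k] B)).toLinearMap ∘ₗ
          TensorProduct.map crossCounit LinearMap.id ∘ₗ crossComul φ := by
        rw [TensorProduct.map_comp, crossComul_eq]
        simp only [← LinearMap.comp_assoc] at hmiddle ⊢
        rw [hmiddle]
    _ = crossCounit := by rw [h, LinearMap.comp_id]

theorem map_slant_comp_crossComul {φ : A ⊗[k] B →ₗ[k] B ⊗[k] A} {χB : B →ₗ[k] k}
    {χA : A →ₗ[k] k}
    (h : LinearMap.mul' k k ∘ₗ TensorProduct.map χB χA ∘ₗ φ = crossCounit) :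
    TensorProduct.map (slantRight χB) (slantLeft χA) ∘ₗ crossComul φ = LinearMap.id := by
  have hmiddle : TensorProduct.map (slantRight χB) (slantLeft χA) ∘ₗ crossMiddle φ =
      TensorProduct.map (slantRight Coalgebra.counit) (slantLeft Coalgebra.counit) := by
    apply TensorProduct.ext_fourfold'
    intro a₁ a₂ b₁ b₂
    have hφ := LinearMap.congr_fun h (a₂ ⊗ₜ[k] b₁)
    simp only [LinearMap.comp_apply, crossCounit_tmul] at hφ
    simp [map_slant_crossMiddle_tmul, hφ, smul_tmul', smul_smul, mul_comm]
  rw [crossComul_eq, ← LinearMap.comp_assoc, hmiddle, ← TensorProduct.map_comp,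
    slantRight_counit_comp_comul, slantLeft_counit_comp_comul, TensorProduct.map_id]

theorem smul_counit_map_mul_of_psi_tmul_one {ψ : B ⊗[k] A →ₗ[k] A ⊗[k] B}
    (hψ : ∀ b : B, ψ (b ⊗ₜ[k] (1 : A)) = (1 : A) ⊗ₜ[k] b)
    (hmul : crossCounit (k := k) ∘ₗ crossMul ψ =
      LinearMap.mul' k k ∘ₗ TensorProduct.map crossCounit crossCounit) (b b' : B) :
    (Coalgebra.counit (R := k) (1 : A) • Coalgebra.counit (R := k) (A := B)) (b * b') =
      (Coalgebra.counit (R := k) (1 : A) • Coalgebra.counit (R := k) (A := B)) b *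
        (Coalgebra.counit (R := k) (1 : A) • Coalgebra.counit (R := k) (A := B)) b' := by
  have h := LinearMap.congr_fun hmul ((1 ⊗ₜ[k] b) ⊗ₜ[k] (1 ⊗ₜ[k] b'))
  simp only [LinearMap.comp_apply, crossMul_tmul, hψ, TensorProduct.map_tmul, crossCounit_tmul,
    LinearMap.mulLeft_apply, LinearMap.mulRight_apply, one_mul, LinearMap.mul'_apply] at h
  simp only [LinearMap.smul_apply, smul_eq_mul]
  linear_combination h

theorem smul_counit_map_mul_of_psi_one_tmul {ψ : B ⊗[k] A →ₗ[k] A ⊗[k] B}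
    (hψ : ∀ a : A, ψ ((1 : B) ⊗ₜ[k] a) = a ⊗ₜ[k] (1 : B))
    (hmul : crossCounit (k := k) ∘ₗ crossMul ψ =
      LinearMap.mul' k k ∘ₗ TensorProduct.map crossCounit crossCounit) (a a' : A) :
    (Coalgebra.counit (R := k) (1 : B) • Coalgebra.counit (R := k) (A := A)) (a * a') =
      (Coalgebra.counit (R := k) (1 : B) • Coalgebra.counit (R := k) (A := A)) a *
        (Coalgebra.counit (R := k) (1 : B) • Coalgebra.counit (R := k) (A := A)) a' := by
  have h := LinearMap.congr_fun hmul ((a ⊗ₜ[k] 1) ⊗ₜ[k] (a' ⊗ₜ[k] 1))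
  simp only [LinearMap.comp_apply, crossMul_tmul, hψ, TensorProduct.map_tmul, crossCounit_tmul,
    LinearMap.mulLeft_apply, LinearMap.mulRight_apply, mul_one, LinearMap.mul'_apply] at h
  simp only [LinearMap.smul_apply, smul_eq_mul]
  linear_combination h

omit [Coalgebra k A] [Coalgebra k B] in
theorem map_slant_comp_map_crossMul {ψ : B ⊗[k] A →ₗ[k] A ⊗[k] B} {χB : B →ₗ[k] k}
    {χA : A →ₗ[k] k}
    (hB : ∀ x y : A ⊗[k] B,
      slantRight χB (crossMul ψ (x ⊗ₜ[k] y)) = slantRight χB x * slantRight χB y)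
    (hA : ∀ x y : A ⊗[k] B,
      slantLeft χA (crossMul ψ (x ⊗ₜ[k] y)) = slantLeft χA x * slantLeft χA y) :
    TensorProduct.map (slantRight χB) (slantLeft χA) ∘ₗ
        TensorProduct.map (crossMul ψ) (crossMul ψ) ∘ₗ
        (TensorProduct.tensorTensorTensorComm k (A ⊗[k] B) (A ⊗[k] B) (A ⊗[k] B)
          (A ⊗[k] B)).toLinearMap =
      LinearMap.mul' k (A ⊗[k] B) ∘ₗ
        TensorProduct.map (TensorProduct.map (slantRight χB) (slantLeft χA))
          (TensorProduct.map (slantRight χB) (slantLeft χA)) := by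
  apply TensorProduct.ext_fourfold'
  intro x y x' y'
  simp [hA, hB]

theorem psi_eq_comm_of_retraction {ψ : B ⊗[k] A →ₗ[k] A ⊗[k] B}
    {φ : A ⊗[k] B →ₗ[k] B ⊗[k] A} (F : (A ⊗[k] B) ⊗[k] (A ⊗[k] B) →ₗ[k] A ⊗[k] B)
    (hcomul : crossComul φ ∘ₗ crossMul ψ =
      TensorProduct.map (crossMul ψ) (crossMul ψ) ∘ₗ
        (TensorProduct.tensorTensorTensorComm k (A ⊗[k] B) (A ⊗[k] B) (A ⊗[k] B)
          (A ⊗[k] B)).toLinearMap ∘ₗ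
        TensorProduct.map (crossComul φ) (crossComul φ))
    (hF : F ∘ₗ crossComul φ = LinearMap.id)
    (hFmul : F ∘ₗ TensorProduct.map (crossMul ψ) (crossMul ψ) ∘ₗ
        (TensorProduct.tensorTensorTensorComm k (A ⊗[k] B) (A ⊗[k] B) (A ⊗[k] B)
          (A ⊗[k] B)).toLinearMap =
      LinearMap.mul' k (A ⊗[k] B) ∘ₗ TensorProduct.map F F) :
    ψ = (TensorProduct.comm k B A).toLinearMap := by
  have hF' (x : A ⊗[k] B) : F (crossComul φ x) = x := LinearMap.congr_fun hF x
  apply TensorProduct.ext'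
  intro b a
  calc ψ (b ⊗ₜ[k] a)
      = F (crossComul φ (crossMul ψ (((1 : A) ⊗ₜ[k] b) ⊗ₜ[k] (a ⊗ₜ[k] (1 : B))))) := by
        rw [hF', crossMul_one_tmul_tmul_one]
    _ = F (crossComul φ ((1 : A) ⊗ₜ[k] b)) * F (crossComul φ (a ⊗ₜ[k] (1 : B))) := by
        rw [← LinearMap.comp_apply (crossComul φ), hcomul, ← LinearMap.mul'_apply (R := k),
          ← TensorProduct.map_tmul, ← LinearMap.comp_apply (LinearMap.mul' k _), ← hFmul]
        rfl
    _ = (TensorProduct.comm k B A).toLinearMap (b ⊗ₜ[k] a) := by simp [hF']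

/-- in a cross product bialgebra, `ψ` is left and right conormal if and only
if `ψ` is the flip map. -/
theorem psi_conormal_iff_flip (ψ : B ⊗[k] A →ₗ[k] A ⊗[k] B)
    (φ : A ⊗[k] B →ₗ[k] B ⊗[k] A) (H : IsCrossBialgebra ψ φ) :
    ((∀ (b : B) (a : A),
        (TensorProduct.lid k B)
          ((TensorProduct.map (Coalgebra.counit (R := k) (A := A))
            (LinearMap.id : B →ₗ[k] B)) (ψ (b ⊗ₜ[k] a))) =
          Coalgebra.counit (R := k) a • b) ∧
      (∀ (b : B) (a : A),
        (TensorProduct.rid k A)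
          ((TensorProduct.map (LinearMap.id : A →ₗ[k] A)
            (Coalgebra.counit (R := k) (A := B))) (ψ (b ⊗ₜ[k] a))) =
          Coalgebra.counit (R := k) b • a)) ↔
    ψ = (TensorProduct.comm k B A).toLinearMap := by
  constructor
  · rintro ⟨hleft, hright⟩
    obtain ⟨-, hunit_left, hunit_right, -, hcounit_left, -, -, hcounit_one, hcomul_mul,
      hcounit_mul⟩ := H
    set cA := Coalgebra.counit (R := k) (1 : A)
    set cB := Coalgebra.counit (R := k) (1 : B)
    have hc : cA * cB = 1 := by simpa using hcounit_one
    refine psi_eq_comm_of_retraction (TensorProduct.map (slantRight (cA • Coalgebra.counit))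
      (slantLeft (cB • Coalgebra.counit))) hcomul_mul ?_ ?_
    · apply map_slant_comp_crossComul
      rw [TensorProduct.map_smul_left, TensorProduct.map_smul_right, smul_smul, hc, one_smul,
        mul'_comp_map_counit_comp_phi hcounit_left]
    · apply map_slant_comp_map_crossMul
      · refine slantRight_crossMul
          (smul_counit_map_mul_of_psi_tmul_one (psi_tmul_one hunit_right) hcounit_mul) ?_
        intro b a
        rw [slantRight_smul, LinearMap.smul_apply, LinearMap.smul_apply, smul_eq_mul, mul_smul]
        exact congrArg (cA • ·) (hright b a)
      · refine slantLeft_crossMul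
          (smul_counit_map_mul_of_psi_one_tmul (psi_one_tmul hunit_left) hcounit_mul) ?_
        intro b a
        rw [slantLeft_smul, LinearMap.smul_apply, LinearMap.smul_apply, smul_eq_mul, mul_smul]
        exact congrArg (cB • ·) (hleft b a)
  · rintro rfl
    constructor <;> intro b a <;> simp
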